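/- If G is a graph such that for every edge ab the graph G_{ab} (the induced subgraph on vertices not in N_G(a) ∪ N_G(b)) is well-covered with α(G_{ab}) = α(G) − 1, then G is well-covered. -/

import Mathlib

open Finset

section EdgeIdealPaper

variable {V : Type*} [Fintype V] [DecidableEq V]

/-- `S` is an independent set of vertices in `G`. -/
def IsIndep (G : SimpleGraph V) (S : Finset V) : Prop :=
  ∀ u ∈ S, ∀ v ∈ S, ¬ G.Adj u v

/-- `S` is a maximal independent set of the induced subgraph of `G` on `A`. -/
def IsMaxIndepIn (G : SimpleGraph V) (A S : Finset V) : Prop :=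
  S ⊆ A ∧ IsIndep G S ∧ ∀ v ∈ A, v ∉ S → ¬ IsIndep G (insert v S)

open scoped Classical in
/-- The independence number of the induced subgraph of `G` on `A`. -/
noncomputable def alphaIn (G : SimpleGraph V) (A : Finset V) : ℕ :=
  ((A.powerset).filter (fun S => IsIndep G S)).sup Finset.card

/-- The induced subgraph of `G` on `A` is well-covered. -/
def WellCoveredIn (G : SimpleGraph V) (A : Finset V) : Prop :=
  ∀ S, IsMaxIndepIn G A S → S.card = alphaIn G A

/-- The induced subgraph of `G` on `A` is in the class `W₂`. -/
def W2In (G : SimpleGraph V) (A : Finset V) : Prop :=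
  WellCoveredIn G A ∧
    ∀ x ∈ A, WellCoveredIn G (A.erase x) ∧ alphaIn G (A.erase x) = alphaIn G A

open scoped Classical in
/-- The neighborhood of a vertex `a` in `G`, as a `Finset`. -/
noncomputable def nbr (G : SimpleGraph V) (a : V) : Finset V :=
  univ.filter (fun v => G.Adj a v)

open scoped Classical in
/-- The neighborhood `N_G(S)` of a set `S` of vertices: vertices outside `S`
adjacent to some vertex of `S`. -/
noncomputable def nbrSet (G : SimpleGraph V) (S : Finset V) : Finset V :=
  univ.filter (fun v => v ∉ S ∧ ∃ u ∈ S, G.Adj u v)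

/-- The vertex set of the localization `G_S = G \ (S ∪ N_G(S))`. -/
noncomputable def loc (G : SimpleGraph V) (S : Finset V) : Finset V :=
  univ \ (S ∪ nbrSet G S)

/-- The vertex set of `G_{ab} = G \ (N_G(a) ∪ N_G(b))`. -/
noncomputable def locE (G : SimpleGraph V) (a b : V) : Finset V :=
  univ \ (nbr G a ∪ nbr G b)

/-- The induced subgraph of `G` on `A` has no isolated vertices. -/
def NoIsolatedIn (G : SimpleGraph V) (A : Finset V) : Prop :=
  ∀ v ∈ A, ∃ u ∈ A, G.Adj v u

open scoped Classical in
/-- The reduced Euler characteristic `∑_{F} (-1)^{|F|-1}` (the empty face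
contributing `-1`) of the independence complex of the induced subgraph of `G` on `A`. -/
noncomputable def indEuler (G : SimpleGraph V) (A : Finset V) : ℤ :=
  -∑ S ∈ (A.powerset).filter (fun S => IsIndep G S), (-1 : ℤ) ^ S.card

end EdgeIdealPaper

/-!
Let `S` be a maximal independent set of `G`, `b ∉ S` a vertex with the fewest neighbours in `S`,
and `a ∈ S` a neighbour of `b`. Then `S ∩ G_{ab}` is maximal independent in `G_{ab}`: a vertex `w`
of `G_{ab}` extending it would have `N(w) ∩ S ⊊ N(b) ∩ S`, since its neighbours in `S` lie outside
`G_{ab}`, hence are adjacent to `b`, while `a` is adjacent to `b` but not to `w`. So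
`α(G) - 1 = |S ∩ G_{ab}| < |S| ≤ α(G)`, the strict inequality because `a ∉ G_{ab}`.
-/

section EdgeIdealPaper

section Independence

variable {V : Type*} {G : SimpleGraph V}

lemma IsIndep.mono {S T : Finset V} (hST : S ⊆ T) (hT : IsIndep G T) : IsIndep G S :=
  fun u hu v hv => hT u (hST hu) v (hST hv)

lemma isIndep_insert_iff [DecidableEq V] {S : Finset V} {w : V} (hS : IsIndep G S) :
    IsIndep G (insert w S) ↔ ∀ x ∈ S, ¬ G.Adj w x := by
  refine ⟨fun h x hx => h w (mem_insert_self w S) x (mem_insert_of_mem hx), fun h => ?_⟩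
  intro u hu v hv
  rcases mem_insert.mp hu with rfl | huS <;> rcases mem_insert.mp hv with rfl | hvS
  · exact G.loopless.irrefl _
  · exact h v hvS
  · exact fun huv => h u huS huv.symm
  · exact hS u huS v hvS

lemma IsMaxIndepIn.exists_adj_of_notMem [DecidableEq V] {A S : Finset V}
    (hS : IsMaxIndepIn G A S) {v : V} (hvA : v ∈ A) (hvS : v ∉ S) : ∃ a ∈ S, G.Adj a v := by
  by_contra! hnone
  exact hS.2.2 v hvA hvS <| (isIndep_insert_iff hS.2.1).mpr fun x hx hvx => hnone x hx hvx.symm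

lemma card_le_alphaIn {S A : Finset V} (hSA : S ⊆ A) (hS : IsIndep G S) :
    S.card ≤ alphaIn G A := by
  classical
  exact le_sup (f := Finset.card) (mem_filter.mpr ⟨mem_powerset.mpr hSA, hS⟩)

lemma alphaIn_le_card (A : Finset V) : alphaIn G A ≤ A.card := by
  classical
  exact Finset.sup_le fun T hT => card_le_card (mem_powerset.mp (mem_filter.mp hT).1)

end Independence

variable {V : Type*} [Fintype V] {G : SimpleGraph V}

lemma mem_nbr {a v : V} : v ∈ nbr G a ↔ G.Adj a v := by
  simp [nbr]

variable [DecidableEq V]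

lemma mem_locE {a b x : V} : x ∈ locE G a b ↔ ¬ G.Adj a x ∧ ¬ G.Adj b x := by
  simp [locE, mem_nbr]

lemma nbr_inter_ssubset_of_mem_locE {S : Finset V} (hS : IsIndep G S) {a b w : V} (ha : a ∈ S)
    (hab : G.Adj a b) (hw : w ∈ locE G a b) (hwS : ∀ x ∈ S ∩ locE G a b, ¬ G.Adj w x) :
    nbr G w ∩ S ⊂ nbr G b ∩ S := by
  have hwa : ¬ G.Adj a w := (mem_locE.mp hw).1
  refine ssubset_of_subset_of_ne (fun x hx => ?_) fun heq => ?_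
  · obtain ⟨hwx, hxS⟩ := mem_inter.mp hx
    have hxA : x ∉ locE G a b := fun hxA => hwS x (mem_inter.mpr ⟨hxS, hxA⟩) (mem_nbr.mp hwx)
    have hbx : G.Adj b x := by
      by_contra hbx
      exact hxA (mem_locE.mpr ⟨hS a ha x hxS, hbx⟩)
    exact mem_inter.mpr ⟨mem_nbr.mpr hbx, hxS⟩
  · have haw : a ∈ nbr G w ∩ S := heq ▸ mem_inter.mpr ⟨mem_nbr.mpr hab.symm, ha⟩
    exact hwa (mem_nbr.mp (mem_inter.mp haw).1).symm

lemma isMaxIndepIn_locE_inter {S : Finset V} (hS : IsMaxIndepIn G univ S) {a b : V}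
    (ha : a ∈ S) (hab : G.Adj a b)
    (hb : ∀ w ∉ S, (nbr G b ∩ S).card ≤ (nbr G w ∩ S).card) :
    IsMaxIndepIn G (locE G a b) (S ∩ locE G a b) := by
  refine ⟨inter_subset_right, hS.2.1.mono inter_subset_left, fun w hw hwS' hins => ?_⟩
  have hwS : w ∉ S := fun hwS => hwS' (mem_inter.mpr ⟨hwS, hw⟩)
  have hlt := card_lt_card <| nbr_inter_ssubset_of_mem_locE hS.2.1 ha hab hw
    ((isIndep_insert_iff (hS.2.1.mono inter_subset_left)).mp hins)
  exact (hb w hwS).not_gt hlt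

lemma IsMaxIndepIn.exists_adj_isMaxIndepIn_locE_inter {S : Finset V}
    (hS : IsMaxIndepIn G univ S) (hSne : S ≠ univ) :
    ∃ a ∈ S, ∃ b, G.Adj a b ∧ IsMaxIndepIn G (locE G a b) (S ∩ locE G a b) := by
  obtain ⟨b, hbS, hbmin⟩ := exists_min_image (univ \ S) (fun b => (nbr G b ∩ S).card)
    (sdiff_nonempty.mpr fun h => hSne (univ_subset_iff.mp h))
  obtain ⟨a, ha, hab⟩ := hS.exists_adj_of_notMem (mem_univ b) (mem_sdiff.mp hbS).2
  exact ⟨a, ha, b, hab, isMaxIndepIn_locE_inter hS ha hab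
    fun w hw => hbmin w (mem_sdiff.mpr ⟨mem_univ w, hw⟩)⟩

end EdgeIdealPaper

section EdgeIdealPaper

variable {V : Type*} [Fintype V] [DecidableEq V]

/-- If `G_{ab}` is well-covered with `α(G_{ab}) = α(G) - 1` for all edges `ab`,
then `G` is well-covered. -/
theorem stmt2 (G : SimpleGraph V)
    (h : ∀ a b : V, G.Adj a b → WellCoveredIn G (locE G a b) ∧
      alphaIn G (locE G a b) = alphaIn G Finset.univ - 1) :
    WellCoveredIn G Finset.univ := by
  intro S hS
  have hle : S.card ≤ alphaIn G univ := card_le_alphaIn hS.1 hS.2.1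
  by_cases hSuniv : S = univ
  · refine le_antisymm hle ?_
    rw [hSuniv]
    exact alphaIn_le_card univ
  obtain ⟨a, ha, b, hab, hmax⟩ := hS.exists_adj_isMaxIndepIn_locE_inter hSuniv
  obtain ⟨hwc, hα⟩ := h a b hab
  have hcard : (S ∩ locE G a b).card = alphaIn G univ - 1 := (hwc _ hmax).trans hα
  have haA : a ∉ locE G a b := fun haA => (mem_locE.mp haA).2 hab.symm
  have hlt : (S ∩ locE G a b).card < S.card :=
    card_lt_card <| (ssubset_iff_of_subset inter_subset_left).mpr
      ⟨a, ha, fun haSA => haA (mem_inter.mp haSA).2⟩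
  omega

end EdgeIdealPaper
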